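/- For every integer vector v = (v_1,…,v_r) with 0 ≤ v_r < v_{r−1} < ⋯ < v_1 < r+k, one has Σ_{μ∈W_k} S_μ(ζ_v)·S_{μ*}(ζ_v) = exp(2πik|v|/(r+k)) · r(r+k)^{r−1} / D(v). -/

import Mathlib

open scoped BigOperators
open Complex

noncomputable section

namespace VerlindePaper

/-- The Schur value `S_λ(z₁,…,z_r) = det(z_j^{λ_i+r-i}) / det(z_j^{r-i})`
(indices `i` are 0-based, so the exponent is `λ i + (r - 1 - i)`). -/
noncomputable def schur {r : ℕ} (lam : Fin r → ℤ) (z : Fin r → ℂ) : ℂ :=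
  Matrix.det (Matrix.of fun i j : Fin r => z j ^ (lam i + ((r : ℤ) - 1 - (i : ℕ)))) /
    Matrix.det (Matrix.of fun i j : Fin r => z j ^ ((r : ℤ) - 1 - (i : ℕ)))

/-- `ζ_v = (e^{2πi v_1/(r+k)}, …, e^{2πi v_r/(r+k)})`. -/
noncomputable def zeta (r k : ℕ) (v : Fin r → ℤ) : Fin r → ℂ :=
  fun j => Complex.exp (2 * (Real.pi : ℂ) * Complex.I * (v j : ℂ) / ((r : ℂ) + (k : ℂ)))

/-- `D(v) = ∏_{i<j} (2 sin(π(v_i - v_j)/(r+k)))²`. -/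
noncomputable def Dv (r k : ℕ) (v : Fin r → ℤ) : ℝ :=
  ∏ p ∈ Finset.univ.filter (fun p : Fin r × Fin r => p.1 < p.2),
    (2 * Real.sin (Real.pi * ((v p.1 : ℝ) - (v p.2 : ℝ)) / ((r : ℝ) + (k : ℝ)))) ^ 2

/-- `P̄_k = {μ : 0 ≤ μ_r ≤ ⋯ ≤ μ_1 ≤ k}` (0-based: `μ 0 = μ_1`). -/
def Pbar (r k : ℕ) : Finset (Fin r → ℤ) :=
  (Finset.Icc 0 (fun _ => (k : ℤ))).filter (fun μ => ∀ i j : Fin r, i ≤ j → μ j ≤ μ i)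

/-- `P_k = {μ : 0 ≤ μ_r ≤ ⋯ ≤ μ_1 ≤ k-1}`. -/
def Pk (r k : ℕ) : Finset (Fin r → ℤ) :=
  (Finset.Icc 0 (fun _ => (k : ℤ) - 1)).filter (fun μ => ∀ i j : Fin r, i ≤ j → μ j ≤ μ i)

/-- `W_k = {μ ∈ P̄_k : μ_r = 0}`. -/
def Wk (r k : ℕ) : Finset (Fin r → ℤ) :=
  (Pbar r k).filter (fun μ => ∀ i : Fin r, (i : ℕ) = r - 1 → μ i = 0)

/-- `μ* = (k - μ_r, k - μ_{r-1}, …, k - μ_1)`. -/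
def mustar (k : ℕ) {r : ℕ} (μ : Fin r → ℤ) : Fin r → ℤ :=
  fun i => (k : ℤ) - μ i.rev

/-- `μ ∼ ν` iff `μ - ν` is a constant vector. -/
def sim {r : ℕ} (μ ν : Fin r → ℤ) : Prop := ∃ a : ℤ, ∀ i, μ i = ν i + a

/-- The index set of the Verlinde sums: integer vectors with
`0 = v_r < v_{r-1} < ⋯ < v_1 < r + k`. -/
def Vset (r k : ℕ) : Finset (Fin r → ℤ) :=
  (Finset.Icc 0 (fun _ => (r : ℤ) + (k : ℤ) - 1)).filter
    (fun v => (∀ i j : Fin r, i < j → v j < v i) ∧ ∀ i : Fin r, (i : ℕ) = r - 1 → v i = 0)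

/-- The Verlinde number `V_g(r,d,(λ_x)_{x∈I})`. -/
noncomputable def verlinde (r k : ℕ) (g : ℕ) (d : ℤ) {I : Type*} [Fintype I]
    (lam : I → Fin r → ℤ) : ℂ :=
  (-1 : ℂ) ^ (d * ((r : ℤ) - 1)) * ((k : ℂ) / (r : ℂ)) ^ g *
    ((r : ℂ) * ((r : ℂ) + (k : ℂ)) ^ (r - 1)) ^ ((g : ℤ) - 1) *
    ∑ v ∈ Vset r k,
      Complex.exp (2 * (Real.pi : ℂ) * Complex.I *
          ((d : ℂ) / (r : ℂ) -
            (∑ x, ∑ i, (lam x i : ℂ)) / ((r : ℂ) * ((r : ℂ) + (k : ℂ)))) *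
          (∑ i, (v i : ℂ))) *
        (∏ x, schur (lam x) (zeta r k v)) * ((Dv r k v : ℂ)) ^ (1 - (g : ℤ))

/-- The Hecke transformation
`H¹(μ) = (k - μ_{r-1} + μ_r, μ_1 - μ_{r-1}, …, μ_{r-2} - μ_{r-1}, 0)`. -/
def H1 (k : ℕ) {r : ℕ} (μ : Fin r → ℤ) : Fin r → ℤ := fun j =>
  have hj : (j : ℕ) < r := j.isLt
  if (j : ℕ) = 0 then (k : ℤ) - μ ⟨r - 2, by omega⟩ + μ ⟨r - 1, by omega⟩
  else μ ⟨(j : ℕ) - 1, by omega⟩ - μ ⟨r - 2, by omega⟩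

/-- The iterated Hecke transformation `H^m = H¹ ∘ ⋯ ∘ H¹`. -/
def Hm (k : ℕ) {r : ℕ} (m : ℕ) (μ : Fin r → ℤ) : Fin r → ℤ := (H1 k)^[m] μ

/-- `μ ∈ Y(λ, ω_s)`: `μ` is a partition obtained from `λ` by adding `s` boxes,
no two in the same row. -/
def inY {r : ℕ} (lam : Fin r → ℤ) (s : ℕ) (μ : Fin r → ℤ) : Prop :=
  (∀ i j : Fin r, i ≤ j → μ j ≤ μ i) ∧ (∀ i, μ i - lam i = 0 ∨ μ i - lam i = 1) ∧
    (∑ i, μ i) = (∑ i, lam i) + (s : ℤ)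

/-- The Vandermonde product `Δ(z) = ∏_{i<j} (z_i - z_j)`. -/
noncomputable def vand {r : ℕ} (z : Fin r → ℂ) : ℂ :=
  ∏ p ∈ Finset.univ.filter (fun p : Fin r × Fin r => p.1 < p.2), (z p.1 - z p.2)

/-- `J_v(t) = Σ_{τ ∈ S_r} sgn(τ) exp(2πi (Σ_j v_{τ(j)} t_j)/(r+k))`. -/
noncomputable def Jv (r k : ℕ) (v : Fin r → ℤ) (t : Fin r → Fin (r + k)) : ℂ :=
  ∑ τ : Equiv.Perm (Fin r), ((Equiv.Perm.sign τ : ℤ) : ℂ) *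
    Complex.exp (2 * (Real.pi : ℂ) * Complex.I *
      (∑ j, (v (τ j) : ℂ) * ((t j : ℕ) : ℂ)) / ((r : ℂ) + (k : ℂ)))


/-!
Write `n = r + k`, `ρ = (r - 1, …, 1, 0)` and `a_e = det (ζ_j ^ e_i)`, so that
`S_λ = a_{λ+ρ} / a_ρ`. The `ζ_j` lie on the unit circle, so `conj (ζ ^ e) = ζ ^ (-e)`; since the
exponent vector `μ* + ρ` is `(k + r - 1) - (μ + ρ)` read backwards, this gives
`S_μ S_{μ*} = (∏ ζ_j) ^ k |a_{μ+ρ}|² / |a_ρ|²`, and `|a_ρ|² = D(v)` by Vandermonde.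

As `μ` runs over `W_k`, `μ + ρ` runs over the strictly decreasing tuples in `[0, n)` that
contain `0`. By orthogonality of the distinct `n`-th roots of unity `ζ_j`, the sum of `|a_t|²`
over all `t ∈ (ℤ/n)^r` is `r! n^r`. Translating `t` multiplies `a_t` by a unimodular factor, so
each slice `t_i = 0` contributes `r! n^(r-1)`. Tuples with a repeated entry contribute nothing,
so the `r` slices together count each injective tuple containing `0` exactly once, and these are
the `r!` rearrangements of the decreasing ones. Hence
`∑_{μ ∈ W_k} |a_{μ+ρ}|² = r n^(r-1)`.
-/

open ComplexConjugate Finset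

def alternant {r : ℕ} (z : Fin r → ℂ) (e : Fin r → ℤ) : ℂ :=
  Matrix.det (Matrix.of fun i j => z j ^ e i)

def rho (r : ℕ) : Fin r → ℤ := fun i => (r : ℤ) - 1 - (i : ℕ)

theorem intCast_sign_mul_self {α R : Type*} [Fintype α] [DecidableEq α] [Ring R]
    (σ : Equiv.Perm α) : ((Equiv.Perm.sign σ : ℤ) : R) * (Equiv.Perm.sign σ : ℤ) = 1 := by
  rw [← Int.cast_mul, ← Units.val_mul, Int.units_mul_self, Units.val_one, Int.cast_one]

theorem normSq_sign {α : Type*} [Fintype α] [DecidableEq α] (σ : Equiv.Perm α) :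
    Complex.normSq ((Equiv.Perm.sign σ : ℤ) : ℂ) = 1 := by
  rw [Complex.normSq_intCast, intCast_sign_mul_self]

section Alternant

variable {r : ℕ}

theorem schur_eq_alternant_div (lam : Fin r → ℤ) (z : Fin r → ℂ) :
    schur lam z = alternant z (lam + rho r) / alternant z (rho r) := rfl

theorem alternant_eq_sum (z : Fin r → ℂ) (e : Fin r → ℤ) :
    alternant z e = ∑ σ : Equiv.Perm (Fin r), (Equiv.Perm.sign σ : ℂ) * ∏ i, z (σ i) ^ e i := by
  rw [alternant, ← Matrix.det_transpose, Matrix.det_apply']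
  rfl

theorem alternant_comp_perm (z : Fin r → ℂ) (e : Fin r → ℤ) (σ : Equiv.Perm (Fin r)) :
    alternant z (e ∘ σ) = Equiv.Perm.sign σ * alternant z e :=
  Matrix.det_permute σ (Matrix.of fun i j => z j ^ e i)

theorem alternant_comp_rev (z : Fin r → ℂ) (e : Fin r → ℤ) :
    alternant z (e ∘ Fin.rev) =
      Equiv.Perm.sign (Fin.revPerm : Equiv.Perm (Fin r)) * alternant z e :=
  alternant_comp_perm z e Fin.revPerm

theorem normSq_alternant_comp_perm {z : Fin r → ℂ} (e : Fin r → ℤ) (σ : Equiv.Perm (Fin r)) :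
    Complex.normSq (alternant z (e ∘ σ)) = Complex.normSq (alternant z e) := by
  rw [alternant_comp_perm, Complex.normSq_mul, normSq_sign, one_mul]

theorem alternant_eq_zero_of_not_injective (z : Fin r → ℂ) {e : Fin r → ℤ}
    (he : ¬ Function.Injective e) : alternant z e = 0 := by
  obtain ⟨i, j, hij, hne⟩ : ∃ i j, e i = e j ∧ i ≠ j := by
    simpa [Function.Injective] using he
  exact Matrix.det_zero_of_row_eq hne (funext fun l => by simp [hij])

theorem alternant_const_add {z : Fin r → ℂ} (hz : ∀ j, z j ≠ 0) (c : ℤ) (e : Fin r → ℤ) :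
    alternant z (fun i => c + e i) = (∏ j, z j) ^ c * alternant z e := by
  rw [← prod_zpow, alternant, alternant, ← Matrix.det_mul_row]
  simp only [zpow_add₀ (hz _)]
  rfl

theorem conj_alternant {z : Fin r → ℂ} (hz : ∀ j, ‖z j‖ = 1) (e : Fin r → ℤ) :
    conj (alternant z e) = alternant z (-e) := by
  rw [alternant, alternant, RingHom.map_det]
  congr 1
  ext i j
  simp [map_zpow₀, ← Complex.inv_eq_conj (hz j), zpow_neg]

theorem alternant_rho (z : Fin r → ℂ) :
    alternant z (rho r) =
      Equiv.Perm.sign (Fin.revPerm : Equiv.Perm (Fin r)) * (Matrix.vandermonde z).det := by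
  rw [alternant, ← Matrix.det_transpose, ← Matrix.det_permute' Fin.revPerm]
  congr 1
  ext i j
  simp only [Matrix.transpose_apply, Matrix.submatrix_apply, Matrix.of_apply, id_eq, rho,
    Matrix.vandermonde_apply, Fin.revPerm_apply, Fin.val_rev, ← zpow_natCast]
  congr 1
  omega

theorem neg_rho : -rho r = fun i => -((r : ℤ) - 1) + (rho r ∘ Fin.rev) i := by
  ext i
  simp [rho, Fin.val_rev]
  omega

theorem mustar_add_rho (k : ℕ) (lam : Fin r → ℤ) :
    mustar k lam + rho r =
      fun i => ((k : ℤ) + ((r : ℤ) - 1)) + ((-(lam + rho r)) ∘ Fin.rev) i := by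
  ext i
  simp [mustar, rho, Fin.val_rev]
  omega

theorem schur_mul_schur_mustar {z : Fin r → ℂ} (hz : ∀ j, ‖z j‖ = 1) (lam : Fin r → ℤ)
    (k : ℕ) :
    schur lam z * schur (mustar k lam) z =
      (∏ j, z j) ^ k * Complex.normSq (alternant z (lam + rho r)) /
        Complex.normSq (alternant z (rho r)) := by
  have hz0 : ∀ j, z j ≠ 0 := fun j h => by simpa [h] using hz j
  have hP : ∏ j, z j ≠ 0 := prod_ne_zero_iff.2 fun j _ => hz0 j
  rw [schur_eq_alternant_div, schur_eq_alternant_div, ← Complex.mul_conj, ← Complex.mul_conj,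
    mustar_add_rho, alternant_const_add hz0, alternant_comp_rev, ← conj_alternant hz,
    conj_alternant hz (rho r), neg_rho, alternant_const_add hz0, alternant_comp_rev,
    zpow_add₀ hP, zpow_neg, zpow_natCast]
  set ε : ℂ := ((Equiv.Perm.sign (Fin.revPerm : Equiv.Perm (Fin r)) : ℤ) : ℂ)
  set a := alternant z (lam + rho r)
  rcases eq_or_ne (alternant z (rho r)) 0 with h | h
  · simp [h]
  have hε : ε * ε = 1 := intCast_sign_mul_self _
  have hε0 : ε ≠ 0 := left_ne_zero_of_mul_eq_one hε
  field_simp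
  linear_combination a * conj a * hε

end Alternant

section RootsOfUnity

variable {r n : ℕ} {z : Fin r → ℂ}

theorem sum_pow_mul_conj_pow [NeZero n] {x y : ℂ} (hx : x ^ n = 1) (hy : y ^ n = 1) :
    ∑ a : Fin n, x ^ (a : ℕ) * conj (y ^ (a : ℕ)) = if x = y then (n : ℂ) else 0 := by
  have hy1 : ‖y‖ = 1 := Complex.norm_eq_one_of_pow_eq_one hy (NeZero.ne n)
  have hy0 : y ≠ 0 := by rintro rfl; simp at hy1
  simp only [map_pow, ← Complex.inv_eq_conj hy1, ← mul_pow, ← div_eq_mul_inv]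
  rw [Fin.sum_univ_eq_sum_range (fun a => (x / y) ^ a)]
  split_ifs with h
  · simp [h, hy0]
  · have hxy : x / y ≠ 1 := fun h' => h ((div_eq_one_iff_eq hy0).1 h')
    rw [geom_sum_eq hxy, div_pow, hx, hy, div_one, sub_self, zero_div]

theorem sum_normSq_alternant [NeZero n] (hz : ∀ j, z j ^ n = 1) (hinj : Function.Injective z) :
    ∑ t : Fin r → Fin n, Complex.normSq (alternant z fun i => (t i : ℤ)) =
      r.factorial * n ^ r := by
  have hprod (σ τ : Equiv.Perm (Fin r)) :
      ∑ t : Fin r → Fin n, ∏ i, z (σ i) ^ (t i : ℕ) * conj (z (τ i) ^ (t i : ℕ)) =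
        if σ = τ then (n : ℂ) ^ r else 0 := by
    rw [← Fintype.prod_sum (fun i (a : Fin n) => z (σ i) ^ (a : ℕ) * conj (z (τ i) ^ (a : ℕ)))]
    simp only [sum_pow_mul_conj_pow (hz _) (hz _), hinj.eq_iff]
    split_ifs with h
    · simp [h]
    · obtain ⟨i, hi⟩ : ∃ i, σ i ≠ τ i := by
        by_contra! hc
        exact h (Equiv.ext hc)
      exact prod_eq_zero (mem_univ i) (if_neg hi)
  suffices h : ∑ t : Fin r → Fin n, (Complex.normSq (alternant z fun i => (t i : ℤ)) : ℂ) =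
      r.factorial * n ^ r by exact_mod_cast h
  calc ∑ t : Fin r → Fin n, (Complex.normSq (alternant z fun i => (t i : ℤ)) : ℂ)
      = ∑ σ : Equiv.Perm (Fin r), ∑ τ : Equiv.Perm (Fin r),
          ((Equiv.Perm.sign σ : ℂ) * Equiv.Perm.sign τ) *
            ∑ t : Fin r → Fin n, ∏ i, z (σ i) ^ (t i : ℕ) * conj (z (τ i) ^ (t i : ℕ)) := by
        simp only [← Complex.mul_conj, alternant_eq_sum, map_sum, map_mul, map_intCast,
          map_prod, zpow_natCast, sum_mul_sum]
        rw [sum_comm]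
        refine sum_congr rfl fun σ _ => ?_
        rw [sum_comm]
        refine sum_congr rfl fun τ _ => ?_
        rw [mul_sum]
        refine sum_congr rfl fun t _ => ?_
        rw [mul_mul_mul_comm, prod_mul_distrib]
    _ = ∑ σ : Equiv.Perm (Fin r), (n : ℂ) ^ r := by
        simp only [hprod, mul_ite, mul_zero, sum_ite_eq, mem_univ, if_true,
          intCast_sign_mul_self, one_mul]
    _ = r.factorial * n ^ r := by simp [Fintype.card_perm]

theorem alternant_fin_add (hz : ∀ j, z j ^ n = 1) (t : Fin r → Fin n) (c : Fin n) :
    alternant z (fun i => ((t i + c : Fin n) : ℤ)) =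
      alternant z (fun i => (c : ℤ) + (t i : ℤ)) := by
  unfold alternant
  congr 1
  ext i j
  simp only [Matrix.of_apply, ← Nat.cast_add, zpow_natCast, Fin.val_add, add_comm (c : ℕ)]
  exact (pow_eq_pow_mod _ (hz j)).symm

theorem normSq_alternant_fin_add [NeZero n] (hz : ∀ j, z j ^ n = 1) (t : Fin r → Fin n)
    (c : Fin n) :
    Complex.normSq (alternant z (fun i => ((t i + c : Fin n) : ℤ))) =
      Complex.normSq (alternant z (fun i => (t i : ℤ))) := by
  have hz1 : ∀ j, ‖z j‖ = 1 := fun j => Complex.norm_eq_one_of_pow_eq_one (hz j) (NeZero.ne n)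
  have hz0 : ∀ j, z j ≠ 0 := fun j h => by simpa [h] using hz1 j
  rw [alternant_fin_add hz, alternant_const_add hz0, Complex.normSq_mul,
    Complex.normSq_eq_norm_sq, norm_zpow, norm_prod, prod_eq_one fun j _ => hz1 j, one_zpow,
    one_pow, one_mul]

theorem sum_normSq_alternant_of_apply_eq_zero [NeZero n] (hz : ∀ j, z j ^ n = 1)
    (hinj : Function.Injective z) (i₀ : Fin r) :
    ∑ t : Fin r → Fin n with t i₀ = 0, Complex.normSq (alternant z fun i => (t i : ℤ)) =
      r.factorial * n ^ (r - 1) := by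
  have hslice (c : Fin n) :
      ∑ t : Fin r → Fin n with t i₀ = c, Complex.normSq (alternant z fun i => (t i : ℤ)) =
        ∑ t : Fin r → Fin n with t i₀ = 0, Complex.normSq (alternant z fun i => (t i : ℤ)) := by
    rw [sum_filter, sum_filter]
    refine (Fintype.sum_equiv (Equiv.addRight fun _ => c) _ _ fun t => ?_).symm
    simp only [Equiv.coe_addRight, Pi.add_apply, add_eq_right, normSq_alternant_fin_add hz]
  have htotal := sum_normSq_alternant hz hinj (n := n)
  rw [← sum_fiberwise univ (fun t : Fin r → Fin n => t i₀), sum_congr rfl fun c _ => hslice c,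
    sum_const, card_univ, Fintype.card_fin, nsmul_eq_mul] at htotal
  have hpow : (n : ℝ) ^ r = n * n ^ (r - 1) := by
    rw [← pow_succ', Nat.sub_add_cancel (Nat.one_le_of_lt i₀.isLt)]
  have hn : (n : ℝ) ≠ 0 := Nat.cast_ne_zero.2 (NeZero.ne n)
  apply mul_left_cancel₀ hn
  linear_combination htotal + (r.factorial : ℝ) * hpow

theorem sum_normSq_alternant_injective_of_exists_eq_zero [NeZero n] (hz : ∀ j, z j ^ n = 1)
    (hinj : Function.Injective z) :
    ∑ t : Fin r → Fin n with Function.Injective t ∧ ∃ i, t i = 0,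
        Complex.normSq (alternant z fun i => (t i : ℤ)) =
      r * (r.factorial * n ^ (r - 1)) := by
  calc ∑ t : Fin r → Fin n with Function.Injective t ∧ ∃ i, t i = 0,
        Complex.normSq (alternant z fun i => (t i : ℤ))
      = ∑ i₀ : Fin r, ∑ t : Fin r → Fin n with t i₀ = 0,
          Complex.normSq (alternant z fun i => (t i : ℤ)) := by
        simp only [sum_filter]
        rw [sum_comm]
        refine sum_congr rfl fun t _ => ?_
        by_cases ht : Function.Injective t
        · by_cases h0 : ∃ i, t i = 0
          · obtain ⟨i₀, hi₀⟩ := h0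
            simp [← hi₀, ht.eq_iff, ht]
          · simp_all
        · have : ¬ Function.Injective fun i => (t i : ℤ) := fun h =>
            ht fun i j hij => h (by simp [hij])
          simp [ht, alternant_eq_zero_of_not_injective z this]
    _ = r * (r.factorial * n ^ (r - 1)) := by
        simp [sum_normSq_alternant_of_apply_eq_zero hz hinj]

end RootsOfUnity

theorem sum_injective_eq_factorial_smul_sum_strictAnti {r : ℕ} {α M : Type*} [LinearOrder α]
    [Fintype α] [AddCommMonoid M] (G : (Fin r → α) → M)
    (hG : ∀ t (σ : Equiv.Perm (Fin r)), G (t ∘ σ) = G t) :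
    ∑ t : Fin r → α with Function.Injective t, G t =
      r.factorial • ∑ t : Fin r → α with StrictAnti t, G t := by
  let sort (t : Fin r → α) : Equiv.Perm (Fin r) := Tuple.sort (OrderDual.toDual ∘ t)
  have antitone_sort (t : Fin r → α) : Antitone (t ∘ sort t) :=
    monotone_toDual_comp_iff.1 (Tuple.monotone_sort _)
  have hperms (t : Fin r → α) : ∑ σ : Equiv.Perm (Fin r), G (t ∘ σ) = r.factorial • G t := by
    simp [hG, Fintype.card_perm]
  rw [smul_sum, ← sum_congr rfl fun t _ => hperms t, ← sum_product']
  symm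
  refine sum_nbij' (fun p => p.1 ∘ p.2) (fun t => (t ∘ sort t, (sort t)⁻¹)) ?_ ?_ ?_ ?_ ?_
  · rintro ⟨s, π⟩ hp
    simp only [mem_product, mem_filter, mem_univ, true_and] at hp ⊢
    exact hp.1.injective.comp π.injective
  · intro t ht
    simp only [mem_product, mem_filter, mem_univ, true_and, and_true] at ht ⊢
    exact (antitone_sort t).strictAnti_of_injective (ht.comp (sort t).injective)
  · rintro ⟨s, π⟩ hp
    simp only [mem_product, mem_filter, mem_univ, true_and, and_true] at hp
    have hs : s ∘ π ∘ sort (s ∘ π) = s ∘ π ∘ ⇑π⁻¹ :=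
      Tuple.unique_antitone (antitone_sort (s ∘ π))
        (by simpa [Function.comp_def] using hp.antitone)
    have hσ : sort (s ∘ π) = π⁻¹ :=
      Equiv.ext fun i => (hp.injective.comp π.injective) (congrFun hs i)
    simp only [hσ, inv_inv, Prod.mk.injEq, and_true]
    ext i
    simp
  · intro t _
    ext i
    simp
  · intro p _
    rfl

theorem antitone_add_val_of_strictAnti {r : ℕ} {e : Fin r → ℤ} (he : StrictAnti e) :
    Antitone fun i => e i + (i : ℕ) := by
  intro i j hij
  have hcard := card_le_card_of_injOn e (s := Icc i j) (t := Icc (e j) (e i))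
    (fun x hx => by
      simp only [coe_Icc, Set.mem_Icc] at hx ⊢
      exact ⟨he.antitone hx.2, he.antitone hx.1⟩) he.injective.injOn
  simp only [Fin.card_Icc, Int.card_Icc] at hcard
  have : (i : ℕ) ≤ j := hij
  show e j + (j : ℕ) ≤ e i + (i : ℕ)
  omega

theorem mem_Wk_iff {r k : ℕ} {μ : Fin r → ℤ} :
    μ ∈ Wk r k ↔
      (∀ i, 0 ≤ μ i ∧ μ i ≤ k) ∧ Antitone μ ∧ ∀ i : Fin r, (i : ℕ) = r - 1 → μ i = 0 := by
  simp [Wk, Pbar, Pi.le_def, forall_and, Antitone, and_assoc]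

theorem sub_rho_mem_Wk {r k : ℕ} [NeZero (r + k)] (hr : 1 ≤ r) {t : Fin r → Fin (r + k)}
    (ht : StrictAnti t) (hzero : ∃ i, t i = 0) : (fun i => (t i : ℤ)) - rho r ∈ Wk r k := by
  obtain ⟨i₀, hi₀⟩ := hzero
  let last : Fin r := ⟨r - 1, by omega⟩
  have hanti : Antitone fun i => ((t i : ℕ) : ℤ) + (i : ℕ) :=
    antitone_add_val_of_strictAnti fun i j hij => by exact_mod_cast ht hij
  have hlast : (t last : ℕ) = 0 := by
    have := ht.antitone (show i₀ ≤ last from Fin.mk_le_mk.2 (by omega))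
    rw [hi₀] at this
    simp [nonpos_iff_eq_zero.1 this]
  refine mem_Wk_iff.2 ⟨fun i => ?_, fun i j hij => ?_, fun i hi => ?_⟩
  · have h₀ := hanti (show (⟨0, by omega⟩ : Fin r) ≤ i from Nat.zero_le _)
    have h₁ := hanti (show i ≤ last from Fin.mk_le_mk.2 (by omega))
    have := (t ⟨0, by omega⟩).isLt
    simp only [Pi.sub_apply, rho, hlast, last] at h₀ h₁ ⊢
    omega
  · have := hanti hij
    simp only [Pi.sub_apply, rho] at this ⊢
    omega
  · have : i = last := Fin.ext hi
    simp [this, hlast, rho, last]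
    omega

theorem sum_Wk_eq_sum_strictAnti {r k : ℕ} [NeZero (r + k)] {M : Type*} [AddCommMonoid M]
    (hr : 1 ≤ r) (f : (Fin r → ℤ) → M) :
    ∑ μ ∈ Wk r k, f (μ + rho r) =
      ∑ t : Fin r → Fin (r + k) with StrictAnti t ∧ ∃ i, t i = 0, f fun i => (t i : ℤ) := by
  have hval {μ : Fin r → ℤ} (hμ : μ ∈ Wk r k) (i : Fin r) :
      ((Fin.ofNat (r + k) ((μ + rho r) i).toNat : ℕ) : ℤ) = (μ + rho r) i := by
    have := (mem_Wk_iff.1 hμ).1 i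
    have := i.isLt
    simp only [Fin.val_ofNat, Pi.add_apply, rho]
    rw [Nat.mod_eq_of_lt (by omega), Int.toNat_of_nonneg (by omega)]
  refine sum_nbij' (fun μ i => Fin.ofNat (r + k) ((μ + rho r) i).toNat)
    (fun t => (fun i => (t i : ℤ)) - rho r) ?_ ?_ ?_ ?_ ?_
  · intro μ hμ
    obtain ⟨-, hanti, hzero⟩ := mem_Wk_iff.1 hμ
    simp only [mem_filter, mem_univ, true_and]
    refine ⟨fun i j hij => ?_, ⟨r - 1, by omega⟩, Fin.ext ?_⟩
    · rw [Fin.lt_def, ← Int.ofNat_lt, hval hμ, hval hμ]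
      have := hanti hij.le
      have : (i : ℕ) < j := hij
      simp only [Pi.add_apply, rho]
      omega
    · rw [← Int.natCast_inj, hval hμ]
      simp [rho, hzero ⟨r - 1, by omega⟩ rfl]
      omega
  · intro t ht
    simp only [mem_filter, mem_univ, true_and] at ht
    exact sub_rho_mem_Wk hr ht.1 ht.2
  · intro μ hμ
    ext i
    rw [Pi.sub_apply, hval hμ, Pi.add_apply, add_sub_cancel_right]
  · intro t _
    ext i
    simp
  · intro μ hμ
    congr
    ext i
    rw [hval hμ]

theorem sum_Wk_normSq_alternant {r k : ℕ} {z : Fin r → ℂ} (hr : 1 ≤ r)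
    (hz : ∀ j, z j ^ (r + k) = 1) (hinj : Function.Injective z) :
    ∑ μ ∈ Wk r k, Complex.normSq (alternant z (μ + rho r)) = r * (r + k : ℕ) ^ (r - 1) := by
  have : NeZero (r + k) := ⟨by omega⟩
  have hsort := sum_injective_eq_factorial_smul_sum_strictAnti
    (fun t : Fin r → Fin (r + k) =>
      if ∃ i, t i = 0 then Complex.normSq (alternant z fun i => (t i : ℤ)) else 0)
    fun t σ => by
      have hzero : (∃ i, (t ∘ σ) i = 0) ↔ ∃ i, t i = 0 :=
        (σ.surjective.exists (p := fun i => t i = 0)).symm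
      simp only [hzero]
      split_ifs
      exacts [normSq_alternant_comp_perm (fun i => (t i : ℤ)) σ, rfl]
  simp only [← sum_filter, filter_filter,
    sum_normSq_alternant_injective_of_exists_eq_zero hz hinj, nsmul_eq_mul] at hsort
  rw [sum_Wk_eq_sum_strictAnti hr fun e => Complex.normSq (alternant z e)]
  have hfac : (r.factorial : ℝ) ≠ 0 := Nat.cast_ne_zero.2 r.factorial_ne_zero
  apply mul_left_cancel₀ hfac
  linear_combination -hsort

theorem normSq_exp_mul_I_sub_exp_mul_I (a b : ℝ) :
    Complex.normSq (Complex.exp (a * Complex.I) - Complex.exp (b * Complex.I)) =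
      (2 * Real.sin ((a - b) / 2)) ^ 2 := by
  have hcos : Real.cos (a - b) = Real.cos (2 * ((a - b) / 2)) := by ring_nf
  rw [Real.cos_two_mul, Real.cos_sub] at hcos
  simp only [Complex.normSq_apply, Complex.sub_re, Complex.sub_im, Complex.exp_ofReal_mul_I_re,
    Complex.exp_ofReal_mul_I_im]
  linear_combination Real.sin_sq_add_cos_sq a + Real.sin_sq_add_cos_sq b - 2 * hcos -
    4 * Real.sin_sq_add_cos_sq ((a - b) / 2)

section Zeta

variable {r k : ℕ} {v : Fin r → ℤ}

theorem zeta_eq_zpow (j : Fin r) :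
    zeta r k v j = Complex.exp (2 * (Real.pi : ℂ) * Complex.I / ((r + k : ℕ) : ℂ)) ^ v j := by
  rw [zeta, ← Complex.exp_int_mul]
  push_cast
  ring_nf

theorem zeta_eq_exp_ofReal_mul_I (j : Fin r) :
    zeta r k v j = Complex.exp ((2 * Real.pi * v j / (r + k) : ℝ) * Complex.I) := by
  rw [zeta]
  push_cast
  ring_nf

theorem zeta_pow (j : Fin r) : zeta r k v j ^ (r + k) = 1 := by
  have := j.pos
  rw [zeta_eq_zpow, ← zpow_natCast, ← zpow_mul, mul_comm (v j), zpow_mul, zpow_natCast,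
    (Complex.isPrimitiveRoot_exp (r + k) (by omega)).pow_eq_one, one_zpow]

theorem zeta_injective (hv : StrictAnti v) (hlow : ∀ i, 0 ≤ v i)
    (hhigh : ∀ i, v i < (r : ℤ) + (k : ℤ)) : Function.Injective (zeta r k v) := by
  intro i j hij
  have := i.pos
  have hω := Complex.isPrimitiveRoot_exp (r + k) (by omega)
  have hω0 := hω.ne_zero (by omega)
  rw [zeta_eq_zpow, zeta_eq_zpow, ← div_eq_one_iff_eq (zpow_ne_zero _ hω0),
    ← zpow_sub₀ hω0, hω.zpow_eq_one_iff_dvd] at hij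
  have := hlow i; have := hlow j; have := hhigh i; have := hhigh j
  have hsub := Int.eq_zero_of_abs_lt_dvd hij (by push_cast; rw [abs_lt]; constructor <;> omega)
  exact hv.injective (by omega)

theorem prod_zeta_pow (m : ℕ) :
    (∏ j, zeta r k v j) ^ m =
      Complex.exp (2 * (Real.pi : ℂ) * Complex.I * m * (∑ i, (v i : ℂ)) / ((r : ℂ) + (k : ℂ))) := by
  unfold zeta
  rw [← Complex.exp_sum, ← Complex.exp_nat_mul]
  congr 1
  rw [← sum_div, ← mul_sum]
  ring

theorem normSq_alternant_zeta_rho :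
    Complex.normSq (alternant (zeta r k v) (rho r)) = Dv r k v := by
  rw [alternant_rho, Complex.normSq_mul, Matrix.det_vandermonde, map_prod, Dv, prod_filter,
    Fintype.prod_prod_type]
  simp only [normSq_sign, one_mul]
  refine prod_congr rfl fun i _ => ?_
  rw [map_prod, ← prod_filter, filter_lt_eq_Ioi]
  refine prod_congr rfl fun j _ => ?_
  rw [← neg_sub, Complex.normSq_neg, zeta_eq_exp_ofReal_mul_I, zeta_eq_exp_ofReal_mul_I,
    normSq_exp_mul_I_sub_exp_mul_I]
  congr 3
  ring

end Zeta

theorem sum_Wk_schur_mul_schur_star_general (r k : ℕ) (hr : 1 ≤ r)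
    (v : Fin r → ℤ) (hdec : ∀ i j : Fin r, i < j → v j < v i)
    (hlow : ∀ i, 0 ≤ v i) (hhigh : ∀ i, v i < (r : ℤ) + (k : ℤ)) :
    ∑ μ ∈ Wk r k, schur μ (zeta r k v) * schur (mustar k μ) (zeta r k v) =
      Complex.exp (2 * (Real.pi : ℂ) * Complex.I * (k : ℂ) * (∑ i, (v i : ℂ)) /
          ((r : ℂ) + (k : ℂ))) *
        ((r : ℂ) * ((r : ℂ) + (k : ℂ)) ^ (r - 1) / ((Dv r k v : ℝ) : ℂ)) := by
  have hz : ∀ j, zeta r k v j ^ (r + k) = 1 := zeta_pow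
  have hnorm : ∀ j, ‖zeta r k v j‖ = 1 :=
    fun j => Complex.norm_eq_one_of_pow_eq_one (hz j) (by omega)
  calc ∑ μ ∈ Wk r k, schur μ (zeta r k v) * schur (mustar k μ) (zeta r k v)
      = (∏ j, zeta r k v j) ^ k *
          ((∑ μ ∈ Wk r k, Complex.normSq (alternant (zeta r k v) (μ + rho r)) : ℝ) : ℂ) /
            (Dv r k v : ℂ) := by
        simp only [schur_mul_schur_mustar hnorm, normSq_alternant_zeta_rho, mul_sum, sum_div,
          Complex.ofReal_sum]
    _ = _ := by
        rw [sum_Wk_normSq_alternant hr hz (zeta_injective hdec hlow hhigh), prod_zeta_pow]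
        push_cast
        ring

/-- `Σ_{μ∈W_k} S_μ(ζ_v)·S_{μ*}(ζ_v) = e^{2πik|v|/(r+k)} · r(r+k)^{r-1} / D(v)`. -/
theorem sum_Wk_schur_mul_schur_star (r k : ℕ) (hr : 1 ≤ r) (hk : 1 ≤ k)
    (v : Fin r → ℤ) (hdec : ∀ i j : Fin r, i < j → v j < v i)
    (hlow : ∀ i, 0 ≤ v i) (hhigh : ∀ i, v i < (r : ℤ) + (k : ℤ)) :
    ∑ μ ∈ Wk r k, schur μ (zeta r k v) * schur (mustar k μ) (zeta r k v) =
      Complex.exp (2 * (Real.pi : ℂ) * Complex.I * (k : ℂ) * (∑ i, (v i : ℂ)) /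
          ((r : ℂ) + (k : ℂ))) *
        ((r : ℂ) * ((r : ℂ) + (k : ℂ)) ^ (r - 1) / ((Dv r k v : ℝ) : ℂ)) :=
  sum_Wk_schur_mul_schur_star_general r k hr v hdec hlow hhigh
end VerlindePaper
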